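/- arXiv:1903.08795 — 5 statements merged into one kernel-verified Lean document; each statement's English description precedes it below -/
import Mathlib

section
/- Let H be a 2-connected 3-regular bipartite simple graph with parts X and Y, and let ŷ ∈ Y be such that G = H - ŷ is 2-connected. Then G has no 2-factor, but G has a 2-regular subgraph omitting exactly one vertex. -/
/-!
Double counting the edges of the cubic bipartite graph `H` gives `|X| = |Y|`, whereas a 2-factor
of `H - y₀` would be a 2-regular bipartite graph with parts `X` and `Y - y₀`.

For the second claim fix a neighbour `x` of `y₀`. In `H - y₀ - x` the vertices of `N(y₀) - x` and
`N(x) - y₀` have degree 2 and all others degree 3, so deleting a perfect matching between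
`X' = X - N(y₀)` and `Y' = Y - N(x)` leaves a 2-factor of `H - y₀ - x`. Hall's condition holds:
if `S ⊆ X'` had fewer than `|S|` neighbours in `Y'`, counting the edges at `N(S)` shows that
`N(x) - y₀ ⊆ N(S)` and that only one vertex of `H - y₀` outside `C = S ∪ N(S) ∪ {x}` is adjacent
to `C`, so deleting that vertex would disconnect `H - y₀`.
-/

open scoped Classical

open SimpleGraph

/-- A graph is 2-connected if it has at least 3 vertices and deleting any single vertex
leaves it connected. -/
def TwoConnected {V : Type} [Fintype V] (G : SimpleGraph V) : Prop :=
  3 ≤ Fintype.card V ∧ ∀ v : V, (G.induce {u | u ≠ v}).Connected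

/-- `H` is a 2-regular subgraph: every vertex of `H` has degree exactly 2 in `H`. -/
def IsTwoRegularSub {V : Type} (G : SimpleGraph V) (H : G.Subgraph) : Prop :=
  ∀ v ∈ H.verts, (H.neighborSet v).ncard = 2

open Finset

namespace SimpleGraph

variable {W : Type*} {G : SimpleGraph W}

theorem ncard_neighborSet_eq_degree (v : W) [Fintype (G.neighborSet v)] :
    (G.neighborSet v).ncard = G.degree v := by
  rw [← card_neighborSet_eq_degree, Set.ncard_eq_toFinset_card', Set.toFinset_card]

theorem IsBipartiteWith.ncard_eq_ncard_of_isRegularOfDegree [Fintype W] [DecidableRel G.Adj]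
    {s t : Set W} (h : G.IsBipartiteWith s t) {d : ℕ} (hd : G.IsRegularOfDegree d) (hd0 : d ≠ 0) :
    s.ncard = t.ncard := by
  rw [Set.ncard_eq_toFinset_card', Set.ncard_eq_toFinset_card']
  have hsum := isBipartiteWith_sum_degrees_eq (s := s.toFinset) (t := t.toFinset) (by simpa using h)
  simp only [hd.degree_eq, sum_const, smul_eq_mul] at hsum
  exact Nat.eq_of_mul_eq_mul_right (Nat.pos_of_ne_zero hd0) hsum

end SimpleGraph

theorem TwoConnected.not_subsingleton_boundary {W : Type} [Fintype W] {G : SimpleGraph W}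
    (hG : TwoConnected G) {C : Set W} {a w₁ w₂ : W} (ha : a ∈ C) (h₁ : w₁ ∉ C) (h₂ : w₂ ∉ C)
    (hne : w₁ ≠ w₂) : ¬ {d | d ∉ C ∧ ∃ c ∈ C, G.Adj c d}.Subsingleton := by
  intro hsub
  obtain ⟨u, hu, hbd⟩ : ∃ u ∉ C, ∀ c ∈ C, ∀ d ∉ C, G.Adj c d → d = u := by
    rcases Set.eq_empty_or_nonempty {d | d ∉ C ∧ ∃ c ∈ C, G.Adj c d} with h | ⟨u, hu⟩
    · refine ⟨w₁, h₁, fun c hc d hd hcd => ?_⟩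
      exact absurd (h ▸ ⟨hd, c, hc, hcd⟩ : d ∈ (∅ : Set W)) (Set.notMem_empty d)
    · exact ⟨u, hu.1, fun c hc d hd hcd => hsub ⟨hd, c, hc, hcd⟩ hu⟩
  obtain ⟨w, hw, hwu⟩ : ∃ w ∉ C, w ≠ u := by
    by_cases h : w₁ = u
    · exact ⟨w₂, h₂, fun h' => hne (h.trans h'.symm)⟩
    · exact ⟨w₁, h₁, h⟩
  obtain ⟨p⟩ := (hG.2 u).preconnected ⟨a, fun h => hu (h ▸ ha)⟩ ⟨w, hwu⟩
  obtain ⟨d, -, hdC, hdC'⟩ := p.exists_boundary_dart {v | v.val ∈ C} ha hw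
  exact d.snd.2 (hbd _ hdC _ hdC' d.adj)

section
variable {V : Type} {H : SimpleGraph V}

theorem ncard_preimage_val_ne (A : Set V) (y : V) :
    (Subtype.val ⁻¹' A : Set ↥{u : V | u ≠ y}).ncard = (A \ {y}).ncard := by
  rw [← Set.ncard_preimage_of_injective_subset_range (s := A \ {y}) Subtype.val_injective
    (fun v hv => ⟨⟨v, hv.2⟩, rfl⟩)]
  congr 1
  ext v
  exact (and_iff_left v.2).symm

theorem exists_isTwoRegularSub_induce {s T : Set V} {K : SimpleGraph V} (hKH : K ≤ H)
    (hTs : T ⊆ s) (hKT : ∀ ⦃a b⦄, K.Adj a b → a ∈ T)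
    (hK : ∀ v ∈ T, (K.neighborSet v).ncard = 2) :
    ∃ M : (H.induce s).Subgraph, IsTwoRegularSub (H.induce s) M ∧ M.verts.ncard = T.ncard := by
  refine ⟨{ verts := Subtype.val ⁻¹' T
            Adj := fun a b => K.Adj a b
            adj_sub := fun h => hKH h
            edge_vert := fun h => hKT h
            symm := ⟨fun _ _ h => h.symm⟩ }, fun v hv => ?_, ?_⟩
  · rw [← hK v hv]
    exact Set.ncard_preimage_of_injective_subset_range Subtype.val_injective
      fun w hw => ⟨⟨w, hTs (hKT (K.adj_symm hw))⟩, rfl⟩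
  · exact Set.ncard_preimage_of_injective_subset_range Subtype.val_injective
      fun w hw => ⟨⟨w, hTs hw⟩, rfl⟩

theorem exists_le_ncard_neighborSet_eq_of_selector [Fintype V] {D : Set V} {r : V → V} {k : ℕ}
    (hreg : H.IsRegularOfDegree (k + 1)) (hadj : ∀ v ∉ D, H.Adj v (r v))
    (hD : ∀ v ∉ D, ∀ w ∈ D, H.Adj v w → r v = w)
    (hsymm : ∀ v ∉ D, ∀ w ∉ D, H.Adj v w → r w = v → r v = w) :
    ∃ K ≤ H, (∀ ⦃a b⦄, K.Adj a b → a ∉ D) ∧ ∀ v ∉ D, (K.neighborSet v).ncard = k := by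
  let K : SimpleGraph V :=
    { Adj := fun a b => H.Adj a b ∧ a ∉ D ∧ b ∉ D ∧ r a ≠ b ∧ r b ≠ a
      symm := ⟨fun _ _ h => ⟨h.1.symm, h.2.2.1, h.2.1, h.2.2.2.2, h.2.2.2.1⟩⟩
      loopless := ⟨fun _ h => H.irrefl h.1⟩ }
  refine ⟨K, fun _ _ h => h.1, fun _ _ h => h.2.1, fun v hv => ?_⟩
  have hK : K.neighborSet v = H.neighborSet v \ {r v} := by
    ext w
    simp only [mem_neighborSet, Set.mem_sdiff, Set.mem_singleton_iff]
    constructor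
    · rintro ⟨hvw, -, -, hne, -⟩
      exact ⟨hvw, Ne.symm hne⟩
    · rintro ⟨hvw, hne⟩
      have hw : w ∉ D := fun hw => hne (hD v hv w hw hvw).symm
      exact ⟨hvw, hv, hw, Ne.symm hne, fun h => hne (hsymm v hv w hw hvw h).symm⟩
  rw [hK, Set.ncard_sdiff_singleton_of_mem (s := H.neighborSet v) (hadj v hv),
    ncard_neighborSet_eq_degree, hreg.degree_eq, Nat.add_sub_cancel]

theorem sum_card_neighborFinset_sdiff_insert [Fintype V] {d : ℕ} (hreg : H.IsRegularOfDegree d)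
    {S : Finset V} {x : V} (hx : x ∉ S) :
    ∑ b ∈ S.biUnion (H.neighborFinset ·), #(H.neighborFinset b \ insert x S) + d * #S
        + #{b ∈ S.biUnion (H.neighborFinset ·) | H.Adj x b}
      = d * #(S.biUnion (H.neighborFinset ·)) := by
  set T := S.biUnion (H.neighborFinset ·)
  have hsplit (b : V) : #(H.neighborFinset b \ insert x S) + #{a ∈ insert x S | H.Adj a b} = d := by
    have hinter : H.neighborFinset b ∩ insert x S = {a ∈ insert x S | H.Adj a b} := by
      ext a
      simp [adj_comm, and_comm]
    rw [← hinter, card_sdiff_add_card_inter, card_neighborFinset_eq_degree, hreg.degree_eq]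
  have hcount : ∑ b ∈ T, #{a ∈ insert x S | H.Adj a b} = #{b ∈ T | H.Adj x b} + d * #S := by
    have hdouble :=
      sum_card_bipartiteAbove_eq_sum_card_bipartiteBelow H.Adj (s := insert x S) (t := T)
    simp only [bipartiteAbove, bipartiteBelow] at hdouble
    rw [← hdouble, sum_insert hx]
    congr 1
    rw [mul_comm]
    refine sum_const_nat fun a ha => ?_
    rw [← hreg.degree_eq a, ← card_neighborFinset_eq_degree]
    congr 1
    ext b
    simp only [mem_filter, mem_neighborFinset, and_iff_right_iff_imp]
    exact fun hab => mem_biUnion.2 ⟨a, ha, (mem_neighborFinset _ _ _).2 hab⟩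
  have htotal := sum_congr rfl fun b (_ : b ∈ T) => hsplit b
  rw [sum_add_distrib, hcount, sum_const, smul_eq_mul] at htotal
  linarith
end

section
variable {V : Type} [Fintype V] {H : SimpleGraph V} {X : Set V} {y₀ x : V}

theorem not_exists_spanning_isTwoRegularSub (hbip : H.IsBipartiteWith X Xᶜ)
    (hreg : H.IsRegularOfDegree 3) (hy₀ : y₀ ∉ X) :
    ¬ ∃ M : (H.induce {u | u ≠ y₀}).Subgraph,
      M.IsSpanning ∧ IsTwoRegularSub (H.induce {u | u ≠ y₀}) M := by
  rintro ⟨M, hspan, hM⟩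
  have hMreg : M.spanningCoe.IsRegularOfDegree 2 := fun v => by
    rw [← ncard_neighborSet_eq_degree]
    exact hM v (hspan v)
  have hMbip : M.spanningCoe.IsBipartiteWith (Subtype.val ⁻¹' X) (Subtype.val ⁻¹' Xᶜ) :=
    ⟨disjoint_compl_right.preimage _, fun _ _ h => hbip.mem_of_adj (M.adj_sub h)⟩
  have hH := hbip.ncard_eq_ncard_of_isRegularOfDegree hreg three_ne_zero
  have hG := hMbip.ncard_eq_ncard_of_isRegularOfDegree hMreg two_ne_zero
  rw [ncard_preimage_val_ne, ncard_preimage_val_ne, Set.sdiff_singleton_eq_self hy₀,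
    Set.ncard_sdiff_singleton_of_mem (show y₀ ∈ Xᶜ from hy₀)] at hG
  have : 0 < Xᶜ.ncard := (Set.ncard_pos).2 ⟨y₀, hy₀⟩
  omega

theorem subsingleton_boundary_of_card_filter_not_adj_lt (hreg : H.IsRegularOfDegree 3)
    (hx : H.Adj y₀ x) {S : Finset V} (hS : ∀ a ∈ S, ¬ H.Adj y₀ a)
    (hlt : #{b ∈ S.biUnion (H.neighborFinset ·) | ¬ H.Adj x b} < #S) :
    {d | d ∉ insert x (S ∪ S.biUnion (H.neighborFinset ·)) ∧ d ≠ y₀ ∧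
      ∃ c ∈ insert x (S ∪ S.biUnion (H.neighborFinset ·)), H.Adj c d}.Subsingleton := by
  have hxS : x ∉ S := fun h => hS x h hx
  have hcount := sum_card_neighborFinset_sdiff_insert hreg hxS
  set T := S.biUnion (H.neighborFinset ·) with hT
  have hmemT {b : V} : b ∈ T ↔ ∃ a ∈ S, H.Adj a b := by simp [hT]
  have hy₀T : y₀ ∉ T := fun h => by
    obtain ⟨a, ha, hab⟩ := hmemT.1 h
    exact hS a ha hab.symm
  have hZ : {b ∈ T | H.Adj x b} ⊆ (H.neighborFinset x).erase y₀ := fun b hb => by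
    rw [mem_filter] at hb
    exact mem_erase.2 ⟨fun h => hy₀T (h ▸ hb.1), (mem_neighborFinset _ _ _).2 hb.2⟩
  have hZcard : #((H.neighborFinset x).erase y₀) = 2 := by
    rw [card_erase_of_mem ((mem_neighborFinset _ _ _).2 hx.symm), card_neighborFinset_eq_degree,
      hreg.degree_eq]
  have hZle := card_le_card hZ
  have hsplit := card_filter_add_card_filter_not (s := T) fun b => H.Adj x b
  -- With `Z = T ∩ N(x)` and `L` the sum in `hcount`: `L + 3|S| + |Z| = 3|T| = 3|T \ Z| + 3|Z|`,
  -- where `|T \ Z| < |S|` and `|Z| ≤ 2`; hence `|Z| = 2` and `L ≤ 1`.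
  have hZeq : {b ∈ T | H.Adj x b} = (H.neighborFinset x).erase y₀ :=
    eq_of_subset_of_card_le hZ (by omega)
  have hO : #(T.biUnion fun b => H.neighborFinset b \ insert x S) ≤ 1 :=
    card_biUnion_le.trans (by omega)
  refine Set.Subsingleton.anti (fun p hp q hq => card_le_one.1 hO p hp q hq) ?_
  rintro d ⟨hd, hdy₀, c, hc, hcd⟩
  simp only [mem_insert, mem_union, not_or] at hc hd
  obtain ⟨hdx, hdS, hdT⟩ := hd
  rcases hc with rfl | hcS | hcT
  · refine absurd (filter_subset _ T (hZeq ▸ mem_erase.2 ⟨hdy₀, ?_⟩)) hdT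
    exact (mem_neighborFinset _ _ _).2 hcd
  · exact absurd (hmemT.2 ⟨c, hcS, hcd⟩) hdT
  · exact mem_biUnion.2 ⟨c, hcT, by simpa [hdx, hdS] using hcd⟩

theorem card_le_card_filter_not_adj (hbip : H.IsBipartiteWith X Xᶜ)
    (hreg : H.IsRegularOfDegree 3) (hy₀ : y₀ ∉ X) (hx : H.Adj y₀ x)
    (hG : TwoConnected (H.induce {u | u ≠ y₀})) {S : Finset V}
    (hS : ↑S ⊆ X \ H.neighborSet y₀) :
    #S ≤ #{b ∈ S.biUnion (H.neighborFinset ·) | ¬ H.Adj x b} := by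
  by_contra! hlt
  have hsub := subsingleton_boundary_of_card_filter_not_adj_lt hreg hx (fun a ha => (hS ha).2) hlt
  set C := insert x (S ∪ S.biUnion (H.neighborFinset ·)) with hC
  obtain ⟨w₁, w₂, hne, hw⟩ := card_eq_two.1 (show #((H.neighborFinset y₀).erase x) = 2 by
    rw [card_erase_of_mem ((mem_neighborFinset _ _ _).2 hx), card_neighborFinset_eq_degree,
      hreg.degree_eq])
  have hout {w : V} (h : w ∈ ({w₁, w₂} : Finset V)) : w ≠ y₀ ∧ w ∉ C := by
    rw [← hw, mem_erase, mem_neighborFinset] at h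
    have hwX : w ∈ X := hbip.symm.mem_of_mem_adj hy₀ h.2
    refine ⟨fun h' => hy₀ (h' ▸ hwX), ?_⟩
    simp only [hC, mem_insert, mem_union, mem_biUnion, mem_neighborFinset, not_or, not_exists,
      not_and]
    exact ⟨h.1, fun hwS => (hS hwS).2 h.2, fun a ha haw => hbip.mem_of_mem_adj (hS ha).1 haw hwX⟩
  obtain ⟨a, ha⟩ := card_pos.1 (show 0 < #S by omega)
  refine hG.not_subsingleton_boundary (C := {v | v.val ∈ C})
    (a := ⟨a, fun h => hy₀ (h ▸ (hS ha).1)⟩) (w₁ := ⟨w₁, (hout (by simp)).1⟩)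
    (w₂ := ⟨w₂, (hout (by simp)).1⟩) (by simp [hC, ha]) (hout (by simp)).2 (hout (by simp)).2
    (by simpa using hne) ((hsub.preimage Subtype.val_injective).anti ?_)
  rintro d ⟨hd, c, hc, hcd⟩
  exact ⟨hd, d.2, c, hc, hcd⟩

theorem exists_equiv_adj (hbip : H.IsBipartiteWith X Xᶜ) (hreg : H.IsRegularOfDegree 3)
    (hy₀ : y₀ ∉ X) (hx : H.Adj y₀ x) (hG : TwoConnected (H.induce {u | u ≠ y₀})) :
    ∃ e : ↥(X \ H.neighborSet y₀) ≃ ↥(Xᶜ \ H.neighborSet x),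
      ∀ a : ↥(X \ H.neighborSet y₀), H.Adj a (e a) := by
  have hall (A : Finset ↥(X \ H.neighborSet y₀)) :
      #A ≤ #{b : ↥(Xᶜ \ H.neighborSet x) | ∃ a ∈ A, H.Adj a b} := by
    have hS := card_le_card_filter_not_adj hbip hreg hy₀ hx hG
      (S := A.map (Function.Embedding.subtype _)) fun a ha => by
        obtain ⟨a, -, rfl⟩ := mem_map.1 ha
        exact a.2
    rw [card_map] at hS
    refine hS.trans (le_of_eq ?_)
    rw [← card_map (Function.Embedding.subtype _)]
    congr 1
    ext b
    simpa using fun a haX _ _ hab _ => hbip.mem_of_mem_adj haX hab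
  obtain ⟨f, hf, hadj⟩ := (Fintype.all_card_le_filter_rel_iff_exists_injective _).1 hall
  have hxX : x ∈ X := hbip.symm.mem_of_mem_adj hy₀ hx
  have hcard : Fintype.card ↥(X \ H.neighborSet y₀) = Fintype.card ↥(Xᶜ \ H.neighborSet x) := by
    rw [← Set.toFinset_card, ← Set.toFinset_card, ← Set.ncard_eq_toFinset_card',
      ← Set.ncard_eq_toFinset_card',
      Set.ncard_sdiff (isBipartiteWith_neighborSet_subset hbip.symm hy₀),
      Set.ncard_sdiff (isBipartiteWith_neighborSet_subset hbip hxX), ncard_neighborSet_eq_degree,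
      ncard_neighborSet_eq_degree, hreg.degree_eq, hreg.degree_eq,
      hbip.ncard_eq_ncard_of_isRegularOfDegree hreg three_ne_zero]
  exact ⟨Equiv.ofBijective f ((Fintype.bijective_iff_injective_and_card f).2 ⟨hf, hcard⟩), hadj⟩

theorem exists_le_ncard_neighborSet_eq_two (hbip : H.IsBipartiteWith X Xᶜ)
    (hreg : H.IsRegularOfDegree 3) (hy₀ : y₀ ∉ X) (hx : H.Adj y₀ x)
    (e : ↥(X \ H.neighborSet y₀) ≃ ↥(Xᶜ \ H.neighborSet x))
    (he : ∀ a : ↥(X \ H.neighborSet y₀), H.Adj a (e a)) :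
    ∃ K ≤ H, (∀ ⦃a b⦄, K.Adj a b → a ∉ ({y₀, x} : Set V)) ∧
      ∀ v ∉ ({y₀, x} : Set V), (K.neighborSet v).ncard = 2 := by
  have hxX : x ∈ X := hbip.symm.mem_of_mem_adj hy₀ hx
  -- Neighbours of `y₀` lose `y₀`, neighbours of `x` lose `x`, all other vertices their `e`-partner.
  let r : V → V := fun v =>
    if h : v ∈ X \ H.neighborSet y₀ then e ⟨v, h⟩
    else if h : v ∈ Xᶜ \ H.neighborSet x then e.symm ⟨v, h⟩
    else if H.Adj y₀ v then y₀ else x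
  refine exists_le_ncard_neighborSet_eq_of_selector (r := r) hreg ?_ ?_ ?_
  · intro v hv
    simp only [r]
    split_ifs with h₁ h₂ h₃
    · exact he ⟨v, h₁⟩
    · simpa using (he (e.symm ⟨v, h₂⟩)).symm
    · exact h₃.symm
    · by_cases hvX : v ∈ X
      · exact absurd ⟨hvX, h₃⟩ h₁
      · exact (not_not.1 fun h => h₂ ⟨hvX, h⟩).symm
  · intro v hv w hw hvw
    simp only [Set.mem_insert_iff, Set.mem_singleton_iff] at hw
    rcases hw with rfl | rfl
    · have hvX : v ∈ X := hbip.symm.mem_of_mem_adj hy₀ hvw.symm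
      simp [r, hvX, hvw.symm]
    · have hvX : v ∉ X := hbip.mem_of_mem_adj hxX hvw.symm
      have hy₀v : ¬ H.Adj y₀ v := fun h => hvX (hbip.symm.mem_of_mem_adj hy₀ h)
      simp [r, hvX, hvw.symm, hy₀v]
  · intro v hv w hw hvw hrw
    simp only [r] at hrw
    split_ifs at hrw with h₁ h₂ h₃
    · subst hrw
      have hv' := (e ⟨w, h₁⟩).2
      simp only [r]
      rw [dif_neg fun h => hv'.1 h.1, dif_pos hv']
      simp
    · subst hrw
      have hv' := (e.symm ⟨w, h₂⟩).2
      simp only [r]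
      rw [dif_pos hv']
      simp
    · exact absurd (Or.inl hrw.symm) hv
    · exact absurd (Or.inr hrw.symm) hv

theorem exists_isTwoRegularSub_ncard_verts_eq_sub_one (hbip : H.IsBipartiteWith X Xᶜ)
    (hreg : H.IsRegularOfDegree 3) (hy₀ : y₀ ∉ X) (hG : TwoConnected (H.induce {u | u ≠ y₀})) :
    ∃ M : (H.induce {u | u ≠ y₀}).Subgraph, IsTwoRegularSub (H.induce {u | u ≠ y₀}) M ∧
      M.verts.ncard = ({u : V | u ≠ y₀}).ncard - 1 := by
  obtain ⟨x, hx⟩ := (degree_pos_iff_exists_adj (G := H) y₀).1 (by rw [hreg.degree_eq]; norm_num)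
  obtain ⟨e, he⟩ := exists_equiv_adj hbip hreg hy₀ hx hG
  obtain ⟨K, hKH, hKD, hK⟩ := exists_le_ncard_neighborSet_eq_two hbip hreg hy₀ hx e he
  obtain ⟨M, hM, hcard⟩ := exists_isTwoRegularSub_induce (s := {u | u ≠ y₀}) (T := {y₀, x}ᶜ) hKH
    (fun v hv h => hv (Or.inl h)) hKD hK
  refine ⟨M, hM, hcard.trans ?_⟩
  rw [← Set.ncard_sdiff_singleton_of_mem (show x ∈ {u | u ≠ y₀} from (H.ne_of_adj hx).symm)]
  congr 1
  ext
  simp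
end

theorem bipartite_minus_vertex_general {V : Type} [Fintype V] (H : SimpleGraph V)
    (X Y : Set V) (hpart : ∀ v : V, (v ∈ X ∧ v ∉ Y) ∨ (v ∈ Y ∧ v ∉ X))
    (hbip : ∀ ⦃u v⦄, H.Adj u v → (u ∈ X ∧ v ∈ Y) ∨ (u ∈ Y ∧ v ∈ X))
    (hreg : ∀ v : V, (H.neighborSet v).ncard = 3)
    (y0 : V) (hy0 : y0 ∈ Y)
    (hG2conn : TwoConnected (H.induce {u | u ≠ y0})) :
    (¬ ∃ M : (H.induce {u | u ≠ y0}).Subgraph,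
        M.IsSpanning ∧ IsTwoRegularSub (H.induce {u | u ≠ y0}) M) ∧
    (∃ M : (H.induce {u | u ≠ y0}).Subgraph,
        IsTwoRegularSub (H.induce {u | u ≠ y0}) M ∧
        M.verts.ncard = ({u : V | u ≠ y0}).ncard - 1) := by
  obtain rfl : Y = Xᶜ := Set.ext fun v => by rcases hpart v with h | h <;> simp [h]
  have hbip' : H.IsBipartiteWith X Xᶜ := ⟨disjoint_compl_right, hbip⟩
  have hreg' : H.IsRegularOfDegree 3 := fun v => by rw [← ncard_neighborSet_eq_degree, hreg]
  exact ⟨not_exists_spanning_isTwoRegularSub hbip' hreg' hy0,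
    exists_isTwoRegularSub_ncard_verts_eq_sub_one hbip' hreg' hy0 hG2conn⟩

/-- Deleting a suitable vertex `y0` of `Y` from a 2-connected cubic bipartite graph yields a
graph with no 2-factor, but with a 2-regular subgraph omitting exactly one vertex. -/
theorem bipartite_minus_vertex {V : Type} [Fintype V] (H : SimpleGraph V)
    (X Y : Set V) (hpart : ∀ v : V, (v ∈ X ∧ v ∉ Y) ∨ (v ∈ Y ∧ v ∉ X))
    (hbip : ∀ ⦃u v⦄, H.Adj u v → (u ∈ X ∧ v ∈ Y) ∨ (u ∈ Y ∧ v ∈ X))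
    (hreg : ∀ v : V, (H.neighborSet v).ncard = 3)
    (h2conn : TwoConnected H)
    (y0 : V) (hy0 : y0 ∈ Y)
    (hG2conn : TwoConnected (H.induce {u | u ≠ y0})) :
    (¬ ∃ M : (H.induce {u | u ≠ y0}).Subgraph,
        M.IsSpanning ∧ IsTwoRegularSub (H.induce {u | u ≠ y0}) M) ∧
    (∃ M : (H.induce {u | u ≠ y0}).Subgraph,
        IsTwoRegularSub (H.induce {u | u ≠ y0}) M ∧
        M.verts.ncard = ({u : V | u ≠ y0}).ncard - 1) :=
  bipartite_minus_vertex_general H X Y hpart hbip hreg y0 hy0 hG2conn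
end

section
/- Every connected 3-regular simple graph on n vertices has at most (n-7)/3 cut-edges, provided it has at least one cut-edge. -/
/-!
Delete all `c` bridges of `G`. Each deleted bridge splits a component, so at least `c + 1`
components remain, and each of them has lost some degree: a component in which every vertex kept
degree `3` would be closed under adjacency in `G`, hence all of `G`, and could contain no deleted
bridge. For a component with `s` vertices and degree sum `e < 3s`, the sum `e` is even and at most
`s (s - 1)`, which forces `7 + 2e ≤ 7s`. Summing over components, with total degree sum
`3n - 2c`, gives `7 (c + 1) + 2 (3n - 2c) ≤ 7n`.
-/

open SimpleGraph Finset

/-- The parity condition excludes `s = 4`, `e = 11`: a component missing a single edge end has at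
least five vertices. -/
theorem Nat.seven_add_two_mul_le_of_even {s e : ℕ} (hs : 1 ≤ s) (he : Even e)
    (he_lt : e < 3 * s) (he_le : e ≤ s * (s - 1)) : 7 + 2 * e ≤ 7 * s := by
  obtain ⟨r, rfl⟩ := he
  rcases le_or_gt 5 s with h | h
  · omega
  · interval_cases s <;> omega

namespace SimpleGraph

variable {V : Type*} {G H : SimpleGraph V}

theorem Preconnected.mem_edgeSet_of_isBridge (hG : G.Preconnected) {e : Sym2 V}
    (he : G.IsBridge e) : e ∈ G.edgeSet := by
  induction e with
  | h u v => exact he.reachable_iff_adj.mp (hG u v)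

theorem Connected.card_connectedComponent_eq_one (hG : G.Connected) :
    Nat.card G.ConnectedComponent = 1 :=
  Nat.card_eq_one_iff_unique.mpr ⟨hG.preconnected.subsingleton_connectedComponent,
    ⟨G.connectedComponentMk hG.nonempty.some⟩⟩

theorem IsBridge.card_connectedComponent_lt_deleteEdges [Finite V] {u v : V} (huv : H.Adj u v)
    (hb : H.IsBridge s(u, v)) :
    Nat.card H.ConnectedComponent < Nat.card (H.deleteEdges {s(u, v)}).ConnectedComponent := by
  have := Fintype.ofFinite H.ConnectedComponent
  have := Fintype.ofFinite (H.deleteEdges {s(u, v)}).ConnectedComponent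
  simp only [Nat.card_eq_fintype_card]
  refine Fintype.card_lt_of_surjective_not_injective _
    (ConnectedComponent.surjective_map_ofLE (deleteEdges_le _)) fun hinj => hb ?_
  exact ConnectedComponent.exact <| hinj <| ConnectedComponent.sound huv.reachable

theorem card_connectedComponent_add_card_le_deleteEdges [Finite V] [DecidableEq V]
    (S : Finset (Sym2 V)) (hSe : ↑S ⊆ H.edgeSet) (hSb : ∀ e ∈ S, H.IsBridge e) :
    Nat.card H.ConnectedComponent + #S ≤ Nat.card (H.deleteEdges S).ConnectedComponent := by
  induction S using Finset.induction_on with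
  | empty => simp
  | @insert e S heS ih =>
    induction e with
    | h u v =>
    have hadj : (H.deleteEdges S).Adj u v := by
      simpa [deleteEdges_adj, heS] using hSe (mem_insert_self _ S)
    have hbridge : (H.deleteEdges S).IsBridge s(u, v) :=
      (hSb _ (mem_insert_self _ S)).anti (deleteEdges_le _)
    have hdel : (H.deleteEdges S).deleteEdges {s(u, v)} = H.deleteEdges ↑(insert s(u, v) S) := by
      rw [deleteEdges_deleteEdges, coe_insert, Set.insert_eq, Set.union_comm]
    have hlt := hdel ▸ hbridge.card_connectedComponent_lt_deleteEdges hadj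
    have hle := ih (fun f hf => hSe (mem_insert_of_mem hf))
      fun f hf => hSb f (mem_insert_of_mem hf)
    rw [card_insert_of_notMem heS]
    omega

theorem ConnectedComponent.supp_eq_univ_of_forall_adj (hG : G.Preconnected)
    (C : H.ConnectedComponent) (hC : ∀ v ∈ C.supp, ∀ w, G.Adj v w → H.Adj v w) :
    C.supp = Set.univ := by
  obtain ⟨v₀, hv₀⟩ := C.nonempty_supp
  refine Set.eq_univ_of_forall fun w => ?_
  obtain ⟨p⟩ := hG v₀ w
  induction p with
  | nil => exact hv₀
  | cons h p ih => exact ih ((C.mem_supp_congr_adj (hC _ hv₀ _ h)).mp hv₀)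

section Fintype

variable [Fintype V]

theorem adj_of_le_of_degree_le [DecidableRel G.Adj] [DecidableRel H.Adj] (hle : H ≤ G) {v w : V}
    (hdeg : G.degree v ≤ H.degree v) (hadj : G.Adj v w) : H.Adj v w := by
  have hsub : H.neighborFinset v ⊆ G.neighborFinset v := fun w hw => by
    simpa using hle (by simpa using hw)
  rw [← mem_neighborFinset, eq_of_subset_of_card_le hsub hdeg]
  exact (G.mem_neighborFinset v w).mpr hadj

variable [DecidableEq V]

theorem sum_degrees_deleteEdges_add [DecidableRel G.Adj] (S : Finset (Sym2 V))
    (hS : ↑S ⊆ G.edgeSet) [DecidableRel (G.deleteEdges S).Adj] :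
    ∑ v, (G.deleteEdges S).degree v + 2 * #S = ∑ v, G.degree v := by
  have hsub : S ⊆ G.edgeFinset := fun e he => mem_edgeFinset.mpr (hS he)
  rw [sum_degrees_eq_twice_card_edges, sum_degrees_eq_twice_card_edges, edgeFinset_deleteEdges,
    card_sdiff_of_subset hsub]
  have := card_le_card hsub
  omega

theorem Connected.exists_degree_deleteEdges_lt [DecidableRel G.Adj] (hG : G.Connected)
    {S : Set (Sym2 V)} [DecidableRel (G.deleteEdges S).Adj] (hS : ∀ e ∈ S, G.IsBridge e)
    (hne : S.Nonempty) (C : (G.deleteEdges S).ConnectedComponent) :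
    ∃ v ∈ C.supp, (G.deleteEdges S).degree v < G.degree v := by
  by_contra! h
  have huniv := C.supp_eq_univ_of_forall_adj hG.preconnected
    fun v hv _ => adj_of_le_of_degree_le (deleteEdges_le S) (h v hv)
  obtain ⟨⟨u, v⟩, he⟩ := hne
  refine hS _ he ((C.reachable_of_mem_supp (huniv ▸ trivial) (huniv ▸ trivial)).mono ?_)
  exact deleteEdges_anti (Set.singleton_subset_iff.mpr he)

namespace ConnectedComponent

variable [DecidableRel H.Adj] (C : H.ConnectedComponent)

theorem degree_induce_supp {v : V} (hv : v ∈ C.supp) :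
    (H.induce C.supp).degree ⟨v, hv⟩ = H.degree v :=
  degree_induce_of_neighborSet_subset fun _ hw => C.mem_supp_of_adj_mem_supp hv hw

theorem even_sum_degree_supp : Even (∑ v ∈ C.supp.toFinset, H.degree v) := by
  rw [← Finset.sum_set_coe,
    Fintype.sum_congr _ _ fun v : C.supp => (C.degree_induce_supp v.2).symm,
    sum_degrees_eq_twice_card_edges]
  exact even_two_mul _

theorem degree_lt_card_supp {v : V} (hv : v ∈ C.supp) : H.degree v < #C.supp.toFinset := by
  rw [← C.degree_induce_supp hv, Set.toFinset_card]
  exact degree_lt_card_verts _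

theorem sum_sum_supp {M : Type*} [AddCommMonoid M] (f : V → M) :
    ∑ C : H.ConnectedComponent, ∑ v ∈ C.supp.toFinset, f v = ∑ v, f v := by
  classical
  convert Finset.sum_fiberwise univ H.connectedComponentMk f using 3 with C
  ext v
  simp

theorem seven_add_two_mul_sum_degree_le (hdeg : ∀ v, H.degree v ≤ 3)
    (hC : ∃ v ∈ C.supp, H.degree v < 3) :
    7 + 2 * ∑ v ∈ C.supp.toFinset, H.degree v ≤ 7 * #C.supp.toFinset := by
  obtain ⟨v, hv, hlt⟩ := hC
  have hv' : v ∈ C.supp.toFinset := Set.mem_toFinset.mpr hv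
  refine Nat.seven_add_two_mul_le_of_even (card_pos.mpr ⟨v, hv'⟩) C.even_sum_degree_supp ?_ ?_
  · calc _ < ∑ _ ∈ C.supp.toFinset, 3 := sum_lt_sum (fun w _ => hdeg w) ⟨v, hv', hlt⟩
      _ = 3 * _ := by rw [sum_const, smul_eq_mul, mul_comm]
  · calc _ ≤ ∑ _ ∈ C.supp.toFinset, (#C.supp.toFinset - 1) :=
          sum_le_sum fun w hw =>
            Nat.le_sub_one_of_lt (C.degree_lt_card_supp (Set.mem_toFinset.mp hw))
      _ = _ := by rw [sum_const, smul_eq_mul]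

end ConnectedComponent

theorem seven_mul_card_connectedComponent_add_le [DecidableRel H.Adj]
    (hdeg : ∀ v, H.degree v ≤ 3)
    (hC : ∀ C : H.ConnectedComponent, ∃ v ∈ C.supp, H.degree v < 3) :
    7 * Nat.card H.ConnectedComponent + 2 * ∑ v, H.degree v ≤ 7 * Fintype.card V :=
  calc 7 * Nat.card H.ConnectedComponent + 2 * ∑ v, H.degree v
      = ∑ C : H.ConnectedComponent, (7 + 2 * ∑ v ∈ C.supp.toFinset, H.degree v) := by
        rw [sum_add_distrib, ← mul_sum, ConnectedComponent.sum_sum_supp, sum_const, card_univ,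
          Nat.card_eq_fintype_card, smul_eq_mul, mul_comm]
    _ ≤ ∑ C : H.ConnectedComponent, 7 * #C.supp.toFinset :=
        sum_le_sum fun C _ => C.seven_add_two_mul_sum_degree_le hdeg (hC C)
    _ = 7 * Fintype.card V := by
        rw [← mul_sum]
        simpa using ConnectedComponent.sum_sum_supp (H := H) fun _ => (1 : ℕ)

end Fintype

end SimpleGraph

/-- A connected cubic simple graph on `n` vertices with at least one cut-edge has at most
`(n-7)/3` cut-edges, i.e. `3c + 7 ≤ n` where `c` is the number of cut-edges. -/
theorem cubic_cut_edge_bound {V : Type} [Fintype V] (G : SimpleGraph V) (n c : ℕ)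
    (hn : Fintype.card V = n)
    (hconn : G.Connected)
    (hreg : ∀ v : V, (G.neighborSet v).ncard = 3)
    (hc : {e : Sym2 V | G.IsBridge e}.ncard = c)
    (hpos : 1 ≤ c) :
    3 * c + 7 ≤ n := by
  classical
  subst hn
  have hdeg (v : V) : G.degree v = 3 := by
    rw [← hreg v, Set.ncard_eq_toFinset_card']
    rfl
  set B : Finset (Sym2 V) := {e | G.IsBridge e}
  have hB : ∀ e ∈ B, G.IsBridge e := fun e he => (mem_filter.mp he).2
  have hBc : #B = c := by
    rw [← hc, ← Set.ncard_coe_finset]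
    simp [B]
  have hBe : ↑B ⊆ G.edgeSet := fun e he => hconn.preconnected.mem_edgeSet_of_isBridge (hB e he)
  have hcomp := card_connectedComponent_add_card_le_deleteEdges B hBe hB
  have hsum := sum_degrees_deleteEdges_add B hBe
  obtain ⟨e, he⟩ : B.Nonempty := card_pos.mp (hBc ▸ hpos)
  have hcount := seven_mul_card_connectedComponent_add_le (H := G.deleteEdges B)
    (fun v => hdeg v ▸ degree_le_of_le (deleteEdges_le _))
    fun C => by simpa [hdeg] using hconn.exists_degree_deleteEdges_lt hB ⟨e, he⟩ C
  simp only [hdeg, sum_const, card_univ, smul_eq_mul] at hsum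
  rw [hconn.card_connectedComponent_eq_one] at hcomp
  omega
end

section
/- Let G be a 3-regular multigraph and S ⊆ V(G) a Tutte set with o(G - S) ≥ |S| + 2 such that exactly three odd components of G - S receive exactly one edge from S and all other odd components receive at least three edges. Then o(G - S) = |S| + 2, G - S has no even components, each other odd component receives exactly three edges from S, and S is an independent set. -/
/-!
Double counting of the edges between `S` and `V - S`. Each vertex of `S` sends at most three of
them, so there are at most `3|S|`. On the other side, connectivity makes every component of
`G - S` receive at least one, the three special odd components receive exactly one and every
other odd component at least three, so there are at least `3 o(G - S) - 6 + #even components`.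
Since `o(G - S) ≥ |S| + 2`, all these estimates are equalities: there is no even component, no
odd component receives more than three edges, `o(G - S) = |S| + 2`, and every vertex of `S` has
all three neighbours outside `S`.
-/

open SimpleGraph

/-- The set of edges of `G` joining `S` to the component `C` of `G - S`. -/
def crossEdges {V : Type} (G : SimpleGraph V) (S : Set V)
    (C : (G.induce Sᶜ).ConnectedComponent) : Set (Sym2 V) :=
  {e | ∃ u v, e = s(u, v) ∧ G.Adj u v ∧ u ∈ S ∧
    ∃ hv : v ∈ Sᶜ, (⟨v, hv⟩ : ↥(Sᶜ)) ∈ C.supp}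

/-- The number of odd components of `G - S`. -/
noncomputable def oddComponents {V : Type} (G : SimpleGraph V) (S : Set V) : ℕ :=
  {C : (G.induce Sᶜ).ConnectedComponent | Odd C.supp.ncard}.ncard

open scoped Function

def boundaryEdges {V : Type} (G : SimpleGraph V) (S : Set V) : Set (Sym2 V) :=
  {e | ∃ u v, e = s(u, v) ∧ G.Adj u v ∧ u ∈ S ∧ v ∉ S}

section BoundaryEdges

variable {V : Type} {G : SimpleGraph V} {S : Set V}

lemma iUnion_crossEdges : ⋃ C, crossEdges G S C = boundaryEdges G S := by
  ext e
  simp only [Set.mem_iUnion]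
  constructor
  · rintro ⟨C, u, v, rfl, huv, hu, hv, -⟩
    exact ⟨u, v, rfl, huv, hu, hv⟩
  · rintro ⟨u, v, rfl, huv, hu, hv⟩
    exact ⟨_, u, v, rfl, huv, hu, hv, rfl⟩

lemma pairwise_disjoint_crossEdges : Pairwise (Disjoint on (crossEdges G S)) := by
  intro C C' hCC'
  rw [Function.onFun_apply, Set.disjoint_left]
  rintro e ⟨u, v, rfl, -, hu, hv, hvC⟩ ⟨u', v', he, -, hu', hv', hv'C⟩
  rcases Sym2.eq_iff.1 he with ⟨rfl, rfl⟩ | ⟨rfl, rfl⟩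
  · exact hCC' (hvC.symm.trans hv'C)
  · exact hv' hu

lemma finsum_ncard_crossEdges [Finite V] :
    ∑ᶠ C, (crossEdges G S C).ncard = (boundaryEdges G S).ncard := by
  rw [← iUnion_crossEdges,
    Set.ncard_iUnion_of_finite (fun _ => Set.toFinite _) pairwise_disjoint_crossEdges]

lemma crossEdges_nonempty (hconn : G.Connected) (hS : S.Nonempty)
    (C : (G.induce Sᶜ).ConnectedComponent) : (crossEdges G S C).Nonempty := by
  obtain ⟨s, hs⟩ := hS
  obtain ⟨⟨x, hx⟩, rfl⟩ := C.exists_rep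
  obtain ⟨d, -, ⟨hfst, hfstC⟩, hsnd⟩ := (hconn.preconnected x s).some.exists_boundary_dart
    {y | ∃ hy : y ∈ Sᶜ, (⟨y, hy⟩ : ↥(Sᶜ)) ∈ ((G.induce Sᶜ).connectedComponentMk ⟨x, hx⟩).supp}
    ⟨hx, rfl⟩ (fun ⟨hs', _⟩ => hs' hs)
  -- A walk from `C` to `S` leaves `C` along some dart; its head is in `S`, or else in `C`.
  by_cases hdS : d.snd ∈ S
  · exact ⟨_, d.snd, d.fst, rfl, d.adj.symm, hdS, hfst, hfstC⟩
  · exact absurd ⟨hdS, (ConnectedComponent.connectedComponentMk_eq_of_adj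
      (show (G.induce Sᶜ).Adj ⟨d.fst, hfst⟩ ⟨d.snd, hdS⟩ from d.adj)).symm.trans hfstC⟩ hsnd

lemma ncard_boundaryEdges_le_finsum [Finite V] :
    (boundaryEdges G S).ncard ≤ ∑ᶠ u ∈ S, (G.neighborSet u \ S).ncard := by
  have hsub : boundaryEdges G S ⊆ ⋃ u ∈ S, (fun v => s(u, v)) '' (G.neighborSet u \ S) := by
    rintro _ ⟨u, v, rfl, huv, hu, hv⟩
    exact Set.mem_biUnion hu ⟨v, ⟨huv, hv⟩, rfl⟩
  calc (boundaryEdges G S).ncard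
      ≤ (⋃ u ∈ S, (fun v => s(u, v)) '' (G.neighborSet u \ S)).ncard :=
        Set.ncard_le_ncard hsub (Set.toFinite _)
    _ ≤ ∑ᶠ u ∈ S, ((fun v => s(u, v)) '' (G.neighborSet u \ S)).ncard :=
        S.toFinite.ncard_biUnion_le _
    _ ≤ ∑ᶠ u ∈ S, (G.neighborSet u \ S).ncard := by
        rw [finsum_mem_eq_finite_toFinset_sum _ S.toFinite,
          finsum_mem_eq_finite_toFinset_sum _ S.toFinite]
        exact Finset.sum_le_sum fun u _ => Set.ncard_image_le (Set.toFinite _)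

variable {k : ℕ}

lemma ncard_boundaryEdges_le [Finite V] (hdeg : ∀ v, (G.neighborSet v).ncard ≤ k) :
    (boundaryEdges G S).ncard ≤ k * S.ncard := by
  refine ncard_boundaryEdges_le_finsum.trans ?_
  rw [finsum_mem_eq_finite_toFinset_sum _ S.toFinite, Set.ncard_eq_toFinset_card _ S.toFinite,
    mul_comm, ← smul_eq_mul, ← Finset.sum_const]
  exact Finset.sum_le_sum fun u _ =>
    (Set.ncard_le_ncard Set.sdiff_subset (Set.toFinite _)).trans (hdeg u)

lemma ncard_boundaryEdges_lt [Finite V] (hdeg : ∀ v, (G.neighborSet v).ncard ≤ k)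
    {u v : V} (hu : u ∈ S) (hv : v ∈ S) (huv : G.Adj u v) :
    (boundaryEdges G S).ncard < k * S.ncard := by
  refine ncard_boundaryEdges_le_finsum.trans_lt ?_
  rw [finsum_mem_eq_finite_toFinset_sum _ S.toFinite, Set.ncard_eq_toFinset_card _ S.toFinite,
    mul_comm, ← smul_eq_mul, ← Finset.sum_const]
  refine Finset.sum_lt_sum (fun w _ =>
    (Set.ncard_le_ncard Set.sdiff_subset (Set.toFinite _)).trans (hdeg w))
    ⟨u, S.toFinite.mem_toFinset.2 hu, ?_⟩
  refine (Set.ncard_lt_ncard ?_ (Set.toFinite _)).trans_le (hdeg u)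
  exact (Set.ssubset_iff_of_subset Set.sdiff_subset).2 ⟨v, huv, fun h => h.2 hv⟩

end BoundaryEdges

lemma three_mul_ncard_add_le_finsum_add {ι : Type*} [Finite ι] (p : ι → Prop) (f : ι → ℕ)
    (hpos : ∀ i, 1 ≤ f i) (hge : ∀ i, p i → f i ≠ 1 → 3 ≤ f i) :
    3 * {i | p i}.ncard + {i | ¬ p i}.ncard + {i | p i ∧ f i ≠ 1 ∧ f i ≠ 3}.ncard ≤
      ∑ᶠ i, f i + 2 * {i | p i ∧ f i = 1}.ncard := by
  classical
  have := Fintype.ofFinite ι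
  simp only [Set.ncard_eq_toFinset_card', Set.toFinset_ofPred, Finset.card_filter,
    finsum_eq_sum_of_fintype, Finset.mul_sum, ← Finset.sum_add_distrib]
  refine Finset.sum_le_sum fun i _ => ?_
  have := hpos i
  have := hge i
  split_ifs <;> grind

/-- For a connected cubic graph with a Tutte set `S` in which exactly three odd components
receive exactly one edge from `S` and all other odd components receive at least three
edges, equality is forced: `o(G-S) = |S| + 2`, `G - S` has no even components, every other
odd component receives exactly three edges, and `S` is independent. -/
theorem tutte_set_equalities {V : Type} [Fintype V] (G : SimpleGraph V)
    (hconn : G.Connected)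
    (hreg : ∀ v : V, (G.neighborSet v).ncard = 3)
    (S : Set V)
    (htutte : S.ncard + 2 ≤ oddComponents G S)
    (hthree : {C : (G.induce Sᶜ).ConnectedComponent |
        Odd C.supp.ncard ∧ (crossEdges G S C).ncard = 1}.ncard = 3)
    (hrest : ∀ C : (G.induce Sᶜ).ConnectedComponent,
        Odd C.supp.ncard → (crossEdges G S C).ncard ≠ 1 → 3 ≤ (crossEdges G S C).ncard) :
    oddComponents G S = S.ncard + 2 ∧
    (∀ C : (G.induce Sᶜ).ConnectedComponent, Odd C.supp.ncard) ∧
    (∀ C : (G.induce Sᶜ).ConnectedComponent,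
        Odd C.supp.ncard → (crossEdges G S C).ncard ≠ 1 → (crossEdges G S C).ncard = 3) ∧
    (∀ u ∈ S, ∀ v ∈ S, ¬ G.Adj u v) := by
  have hS : S.Nonempty := by
    -- a component receiving exactly one edge from `S` exhibits a vertex of `S`
    obtain ⟨C, -, hC⟩ := Set.nonempty_of_ncard_ne_zero (hthree ▸ three_ne_zero)
    obtain ⟨-, u, -, -, -, hu, -⟩ := Set.nonempty_of_ncard_ne_zero (hC ▸ one_ne_zero)
    exact ⟨u, hu⟩
  have hdeg (v : V) : (G.neighborSet v).ncard ≤ 3 := (hreg v).le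
  have hcount := three_mul_ncard_add_le_finsum_add (fun C => Odd C.supp.ncard)
    (fun C => (crossEdges G S C).ncard)
    (fun C => (crossEdges_nonempty hconn hS C).ncard_pos (Set.toFinite _)) hrest
  rw [finsum_ncard_crossEdges, hthree] at hcount
  have hbound : (boundaryEdges G S).ncard ≤ 3 * S.ncard := ncard_boundaryEdges_le hdeg
  rw [_root_.oddComponents] at htutte ⊢
  refine ⟨by omega, fun C => ?_, fun C hodd h1 => ?_, fun u hu v hv huv => ?_⟩
  · by_contra hC
    have : 0 < {C : (G.induce Sᶜ).ConnectedComponent | ¬Odd C.supp.ncard}.ncard :=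
      (Set.ncard_pos (Set.toFinite _)).2 ⟨C, hC⟩
    omega
  · by_contra h3
    have : 0 < {C : (G.induce Sᶜ).ConnectedComponent | Odd C.supp.ncard ∧
        (crossEdges G S C).ncard ≠ 1 ∧ (crossEdges G S C).ncard ≠ 3}.ncard :=
      (Set.ncard_pos (Set.toFinite _)).2 ⟨C, hodd, h1, h3⟩
    omega
  · have := ncard_boundaryEdges_lt hdeg hu hv huv
    omega
end

section
/- If S is a minimal set satisfying o(G - S) ≥ |S| + 2 in a 3-regular multigraph G (a minimal Tutte set), then every vertex of S has its three neighbors in three distinct components of G - S. -/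
open SimpleGraph

/-!
If the three neighbours of `x ∈ S` do not lie in three distinct components of `G - S`, they meet
at most two of them, and every other component of `G - S` is still a component of
`G - (S \ {x})`; hence `o(G - (S \ {x})) ≥ o(G - S) - 2`. Putting `x` back into the graph flips
the parity of the number of odd components, which improves this to
`o(G - (S \ {x})) ≥ o(G - S) - 1 ≥ |S \ {x}| + 2`, so `S \ {x}` is a smaller Tutte set.
-/

namespace SimpleGraph

variable {V W : Type*}

lemma Walk.mem_of_adj_closed {H : SimpleGraph W} {K : Set W}
    (hK : ∀ a b, H.Adj a b → a ∈ K → b ∈ K) : ∀ {a b : W}, H.Walk a b → a ∈ K → b ∈ K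
  | _, _, .nil, ha => ha
  | _, _, .cons hadj p, ha => p.mem_of_adj_closed hK (hK _ _ hadj ha)

lemma ConnectedComponent.supp_subset_of_adj_closed {H : SimpleGraph W} (C : H.ConnectedComponent)
    {K : Set W} (hK : ∀ a b, H.Adj a b → a ∈ K → b ∈ K) {a : W} (ha : a ∈ C.supp)
    (haK : a ∈ K) : C.supp ⊆ K := fun _ hb =>
  (C.reachable_of_mem_supp ha hb).elim fun p => p.mem_of_adj_closed hK haK

lemma ConnectedComponent.mem_supp_map {H : SimpleGraph V} {H' : SimpleGraph W} (φ : H →g H')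
    {C : H.ConnectedComponent} {c : V} (hc : c ∈ C.supp) : φ c ∈ (C.map φ).supp := by
  rw [ConnectedComponent.mem_supp_iff, ← (C.mem_supp_iff c).mp hc, ConnectedComponent.map_mk]

variable {G : SimpleGraph V} {s : Set V} {x : V}

def neighborComponents (G : SimpleGraph V) (s : Set V) (x : V) :
    Set (G.induce s).ConnectedComponent :=
  (G.induce s).connectedComponentMk '' (Subtype.val ⁻¹' G.neighborSet x)

lemma mem_and_connectedComponentMk_ne_of_le_ncard_neighborComponents [Finite V] {d : ℕ}
    (hdeg : (G.neighborSet x).ncard ≤ d) (hcomp : d ≤ (G.neighborComponents s x).ncard)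
    {u v : V} (hu : G.Adj x u) (hv : G.Adj x v) (huv : u ≠ v) :
    ∃ (hu : u ∈ s) (hv : v ∈ s),
      (G.induce s).connectedComponentMk ⟨u, hu⟩ ≠ (G.induce s).connectedComponentMk ⟨v, hv⟩ := by
  set N : Set s := Subtype.val ⁻¹' G.neighborSet x
  replace hcomp : d ≤ ((G.induce s).connectedComponentMk '' N).ncard := hcomp
  have hsub : Subtype.val '' N ⊆ G.neighborSet x := Set.image_preimage_subset _ _
  have hval : (Subtype.val '' N).ncard = N.ncard :=
    Set.ncard_image_of_injective _ Subtype.val_injective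
  have hmk : ((G.induce s).connectedComponentMk '' N).ncard ≤ N.ncard := Set.ncard_image_le
  have hsub_card : (Subtype.val '' N).ncard ≤ (G.neighborSet x).ncard := Set.ncard_le_ncard hsub
  have hN : Subtype.val '' N = G.neighborSet x := Set.eq_of_subset_of_ncard_le hsub (by omega)
  have hinj : Set.InjOn (G.induce s).connectedComponentMk N :=
    Set.injOn_of_ncard_image_eq (by omega)
  obtain ⟨u', hu', rfl⟩ : u ∈ Subtype.val '' N := hN ▸ hu
  obtain ⟨v', hv', rfl⟩ : v ∈ Subtype.val '' N := hN ▸ hv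
  exact ⟨u'.2, v'.2, fun h => huv (congrArg Subtype.val (hinj hu' hv' h))⟩

lemma ConnectedComponent.supp_map_induceHomOfLE_insert {C : (G.induce s).ConnectedComponent}
    (hC : C ∉ G.neighborComponents s x) :
    (C.map (G.induceHomOfLE (Set.subset_insert x s)).toHom).supp =
      Set.inclusion (Set.subset_insert x s) '' C.supp := by
  set ι := G.induceHomOfLE (Set.subset_insert x s)
  refine subset_antisymm ?_ ?_
  · obtain ⟨c, hc⟩ := C.nonempty_supp
    refine ConnectedComponent.supp_subset_of_adj_closed _ ?_ (C.mem_supp_map ι.toHom hc)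
      ⟨c, hc, rfl⟩
    rintro a ⟨b, hb | hb⟩ hab ⟨a, ha, rfl⟩
    · exact (hC ⟨a, hb ▸ hab.symm, ha⟩).elim
    · exact ⟨⟨b, hb⟩, C.mem_supp_of_adj_mem_supp ha hab, rfl⟩
  · rintro _ ⟨c, hc, rfl⟩
    exact C.mem_supp_map ι.toHom hc

lemma ncard_oddComponents_le_add_ncard_oddComponents_insert [Finite V] :
    (G.induce s).oddComponents.ncard ≤
      (G.neighborComponents s x).ncard + (G.induce (insert x s)).oddComponents.ncard := by
  set ι := G.induceHomOfLE (Set.subset_insert x s)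
  set O := (G.induce s).oddComponents
  set T := G.neighborComponents s x
  have hsurvive : (O \ T).ncard ≤ (G.induce (insert x s)).oddComponents.ncard := by
    refine Set.ncard_le_ncard_of_injOn (ConnectedComponent.map ι.toHom) ?_ ?_
    · rintro C ⟨hodd, hC⟩
      change Odd (C.map ι.toHom).supp.ncard
      rwa [ConnectedComponent.supp_map_induceHomOfLE_insert hC,
        Set.ncard_image_of_injective _ (Set.inclusion_injective _)]
    · rintro C ⟨-, hC⟩ D - hCD
      obtain ⟨d, hd⟩ := D.nonempty_supp
      have hιd := hCD ▸ D.mem_supp_map ι.toHom hd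
      rw [ConnectedComponent.supp_map_induceHomOfLE_insert hC] at hιd
      obtain ⟨c, hc, hcd⟩ := hιd
      exact ConnectedComponent.eq_of_common_vertex (Set.inclusion_injective _ hcd ▸ hc) hd
  calc O.ncard = (O ∩ T).ncard + (O \ T).ncard :=
        (Set.ncard_inter_add_ncard_sdiff_eq_ncard O T).symm
    _ ≤ T.ncard + (G.induce (insert x s)).oddComponents.ncard :=
        add_le_add (Set.ncard_le_ncard Set.inter_subset_right) hsurvive

lemma odd_ncard_oddComponents_insert_iff [Finite V] (hx : x ∉ s) :
    Odd (G.induce (insert x s)).oddComponents.ncard ↔ ¬ Odd (G.induce s).oddComponents.ncard := by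
  rw [odd_ncard_oddComponents, odd_ncard_oddComponents, Nat.card_coe_set_eq, Nat.card_coe_set_eq,
    Set.ncard_insert_of_notMem hx, Nat.odd_add_one]

end SimpleGraph

lemma oddComponents_sdiff_singleton {V : Type} (G : SimpleGraph V) (S : Set V) (x : V) :
    oddComponents G (S \ {x}) = (G.induce (insert x Sᶜ)).oddComponents.ncard := by
  rw [_root_.oddComponents, Set.sdiff_eq, Set.compl_inter, compl_compl, Set.union_comm,
    ← Set.insert_eq]

/-- If `S` is a minimal Tutte set in a cubic graph, then every vertex of `S` has its
neighbors outside `S`, in pairwise distinct components of `G - S`. -/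
theorem minimal_tutte_set_neighbors {V : Type} [Fintype V] (G : SimpleGraph V)
    (hreg : ∀ v : V, (G.neighborSet v).ncard = 3)
    (S : Set V)
    (htutte : S.ncard + 2 ≤ oddComponents G S)
    (hmin : ∀ S' : Set V, S' ⊂ S → ¬ (S'.ncard + 2 ≤ oddComponents G S')) :
    ∀ x ∈ S, ∀ u v : V, G.Adj x u → G.Adj x v → u ≠ v →
      ∃ (hu : u ∈ Sᶜ) (hv : v ∈ Sᶜ),
        (G.induce Sᶜ).connectedComponentMk ⟨u, hu⟩ ≠
        (G.induce Sᶜ).connectedComponentMk ⟨v, hv⟩ := by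
  intro x hx u v hxu hxv huv
  refine mem_and_connectedComponentMk_ne_of_le_ncard_neighborComponents (hreg x).le ?_ hxu hxv huv
  by_contra! hfew
  refine hmin (S \ {x}) (Set.sdiff_singleton_ssubset.mpr hx) ?_
  have hcount := ncard_oddComponents_le_add_ncard_oddComponents_insert (G := G) (s := Sᶜ) (x := x)
  have hparity := odd_ncard_oddComponents_insert_iff (G := G) (Set.notMem_compl_iff.mpr hx)
  have hcard := Set.ncard_sdiff_singleton_add_one hx
  rw [oddComponents_sdiff_singleton]
  change S.ncard + 2 ≤ (G.induce Sᶜ).oddComponents.ncard at htutte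
  rw [Nat.odd_iff, Nat.odd_iff] at hparity
  omega
end

section
/- Let G be a graph containing a vertex subset X such that G is obtained from a 3-regular bipartite graph H with parts X and Y by deleting a vertex ŷ ∈ Y and possibly merging each remaining vertex of Y into a connected subgraph lying in a single component of G - X. If every cycle of G entering a component of G - X from X can only exit that component through edges corresponding to a single vertex y ∈ Y, then G has no 2-factor. -/
/-!
Let `M` be a 2-factor and count the darts of `M` leaving `X`. Since `X` is independent, every
`x ∈ X` sends both of its `M`-darts out of `X`, so there are exactly `2|X| = 2|Y|` of them.
Group them by label. Every component of `G - X` is entered only by edges of one label `y ≠ y0`,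
so the darts labelled `y` are exactly the darts of `M` entering the union of the components of
label `y`; that union has only even `M`-degrees, hence an even number of `M`-edges on its
boundary. An even number of at most three edges is at most two, and no dart carries `y0`, so
there are at most `2(|Y| - 1)` darts in total, a contradiction.
-/

open SimpleGraph Finset
open scoped Classical

namespace SimpleGraph

theorem Dart.injOn_edge_of_fst_mem_of_snd_notMem {V : Type*} {K : SimpleGraph V} (S : Set V) :
    Set.InjOn Dart.edge {d : K.Dart | d.fst ∈ S ∧ d.snd ∉ S} := by
  intro d hd d' hd' h
  rcases (K.dart_edge_eq_iff d d').1 h with h | rfl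
  · exact h
  · exact absurd hd.1 hd'.2

theorem card_darts_leaving_label_le_ncard {V Y : Type*} [Fintype V] {G K : SimpleGraph V}
    [DecidableRel K.Adj] (hKG : K ≤ G)
    (lab : Sym2 V → Y) (S : Set V) (y : Y) :
    #{d : K.Dart | (d.fst ∈ S ∧ d.snd ∉ S) ∧ lab d.edge = y} ≤
      {e ∈ G.edgeSet | (∃ u v, e = s(u, v) ∧ u ∈ S ∧ v ∉ S) ∧ lab e = y}.ncard := by
  rw [← Set.ncard_coe_finset]
  refine Set.ncard_le_ncard_of_injOn Dart.edge ?_ ?_ (Set.toFinite _)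
  · intro d hd
    simp only [coe_filter, mem_univ, true_and, Set.mem_ofPred_eq] at hd
    exact ⟨hKG d.edge_mem, ⟨d.fst, d.snd, rfl, hd.1⟩, hd.2⟩
  · refine (Dart.injOn_edge_of_fst_mem_of_snd_notMem S).mono fun d hd => ?_
    simp only [coe_filter, mem_univ, true_and, Set.mem_ofPred_eq] at hd
    exact hd.1

section Darts

variable {V : Type*} [Fintype V] [DecidableEq V] (K : SimpleGraph V) [DecidableRel K.Adj]

theorem card_darts_fst_mem (S : Set V) :
    #{d : K.Dart | d.fst ∈ S} = ∑ v ∈ S.toFinset, K.degree v := by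
  rw [card_eq_sum_card_fiberwise (f := (·.fst)) (t := S.toFinset) fun d hd => by simpa using hd]
  refine sum_congr rfl fun v hv => ?_
  rw [← K.dart_fst_fiber_card_eq_degree v, filter_filter]
  refine congrArg card (filter_congr fun d _ => and_iff_right_of_imp ?_)
  rintro rfl
  simpa using hv

theorem card_darts_leaving_of_independent (S : Set V)
    (hS : ∀ u ∈ S, ∀ v, K.Adj u v → v ∉ S) :
    #{d : K.Dart | d.fst ∈ S ∧ d.snd ∉ S} = ∑ v ∈ S.toFinset, K.degree v := by
  rw [← card_darts_fst_mem]
  exact congrArg card (filter_congr fun d _ => and_iff_left_of_imp fun h => hS _ h _ d.adj)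

theorem even_card_darts_inside (S : Set V) : Even #{d : K.Dart | d.fst ∈ S ∧ d.snd ∈ S} := by
  set D : Finset K.Dart := {d | d.fst ∈ S ∧ d.snd ∈ S}
  rw [card_eq_sum_card_image Dart.edge]
  refine even_sum _ fun e he => ?_
  obtain ⟨d, hd, rfl⟩ := mem_image.1 he
  have hfiber : D.filter (·.edge = d.edge) = {d, d.symm} := by
    rw [← d.edge_fiber, filter_filter]
    ext d'
    simp only [D, mem_filter, mem_univ, true_and] at hd ⊢
    refine ⟨And.right, fun h => ⟨?_, h⟩⟩
    rcases (K.dart_edge_eq_iff d' d).1 h with rfl | rfl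
    · exact hd
    · exact hd.symm
  rw [hfiber, card_pair d.symm_ne.symm]
  exact even_two

theorem even_card_darts_leaving (hdeg : ∀ v, Even (K.degree v)) (S : Set V) :
    Even #{d : K.Dart | d.fst ∈ S ∧ d.snd ∉ S} := by
  have hsplit := card_filter_add_card_filter_not (s := {d : K.Dart | d.fst ∈ S}) (·.snd ∈ S)
  rw [filter_filter, filter_filter, card_darts_fst_mem] at hsplit
  have hsum : Even (∑ v ∈ S.toFinset, K.degree v) := even_sum _ fun v _ => hdeg v
  rw [← hsplit] at hsum
  exact (Nat.even_add.1 hsum).1 (K.even_card_darts_inside S)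

/-- The darts from `X` into the class `c⁻¹ {y}` are, reversed, the darts leaving
`{v ∉ X | c v = y}`, because `c` cannot change along an edge avoiding `X`. -/
theorem even_card_darts_into_fiber {Y : Type*} (hdeg : ∀ v, Even (K.degree v)) (X : Set V)
    (c : V → Y) (hc : ∀ u v, K.Adj u v → u ∉ X → v ∉ X → c u = c v) (y : Y) :
    Even #{d : K.Dart | d.fst ∈ X ∧ d.snd ∉ X ∧ c d.snd = y} := by
  convert K.even_card_darts_leaving hdeg {v | v ∉ X ∧ c v = y} using 1
  refine card_nbij' Dart.symm Dart.symm ?_ ?_ (fun d _ => d.symm_symm) fun d _ => d.symm_symm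
  all_goals
    intro d hd
    simp only [coe_filter, mem_univ, true_and, Set.mem_ofPred_eq, Dart.symm_toProd,
      Prod.fst_swap, Prod.snd_swap] at hd ⊢
  · exact ⟨hd.2, fun h => h.1 hd.1⟩
  · obtain ⟨⟨hfst, rfl⟩, hsnd⟩ := hd
    refine ⟨?_, hfst, rfl⟩
    by_contra hX
    exact hsnd ⟨hX, (hc _ _ d.adj hfst hX).symm⟩

theorem even_card_darts_leaving_label {Y : Type*} (hdeg : ∀ v, Even (K.degree v)) (X : Set V)
    (c : V → Y) (hc : ∀ u v, K.Adj u v → u ∉ X → v ∉ X → c u = c v) (lab : Sym2 V → Y)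
    (hlab : ∀ u v, K.Adj u v → u ∈ X → v ∉ X → lab s(u, v) = c v) (y : Y) :
    Even #{d : K.Dart | (d.fst ∈ X ∧ d.snd ∉ X) ∧ lab d.edge = y} := by
  convert K.even_card_darts_into_fiber hdeg X c hc y using 3 with d
  rw [and_assoc]
  refine and_congr_right fun hfst => and_congr_right fun hsnd => ?_
  rw [show lab d.edge = c d.snd from hlab _ _ d.adj hfst hsnd]

end Darts

end SimpleGraph

theorem exists_vertexLabel_of_componentLabel {V Y : Type*} {G : SimpleGraph V} {X : Set V}
    {y0 : Y} {lab : Sym2 V → Y}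
    (hexit : ∀ C : (G.induce Xᶜ).ConnectedComponent, ∃ y : Y, y ≠ y0 ∧
      ∀ u v, G.Adj u v → u ∈ X → ∀ hv : v ∈ Xᶜ,
        (G.induce Xᶜ).connectedComponentMk ⟨v, hv⟩ = C → lab s(u, v) = y) :
    ∃ c : V → Y, (∀ v ∉ X, c v ≠ y0) ∧
      (∀ u v, G.Adj u v → u ∈ X → v ∉ X → lab s(u, v) = c v) ∧
      ∀ u v, G.Adj u v → u ∉ X → v ∉ X → c u = c v := by
  choose yC hyC_ne hyC_lab using hexit
  refine ⟨fun v => if hv : v ∈ Xᶜ then yC ((G.induce Xᶜ).connectedComponentMk ⟨v, hv⟩) else y0,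
    fun v hv => ?_, fun u v huv hu hv => ?_, fun u v huv hu hv => ?_⟩
  · simp only [dif_pos (Set.mem_compl hv)]
    exact hyC_ne _
  · simp only [dif_pos (Set.mem_compl hv)]
    exact hyC_lab _ u v huv hu hv rfl
  · simp only [dif_pos (Set.mem_compl hu), dif_pos (Set.mem_compl hv)]
    rw [ConnectedComponent.connectedComponentMk_eq_of_adj (G := G.induce Xᶜ)
      (v := ⟨u, hu⟩) (w := ⟨v, hv⟩) huv]

/-- Abstract form of the construction of the family `𝒢`: `G` contains an independent set
`X` with `|X| = |Y|`, each edge leaving `X` carries a label in `Y` coming from the original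
cubic bipartite graph `H` (so each label is carried by at most three edges), and every
component of `G - X` can be entered or exited only through edges carrying one single label
`y ≠ ŷ`.  Then `G` has no 2-factor. -/
theorem exploded_no_two_factor {V Y : Type} [Fintype V] [Fintype Y]
    (G : SimpleGraph V) (X : Set V) (y0 : Y)
    (hXcard : X.ncard = Fintype.card Y)
    (hXindep : ∀ x ∈ X, ∀ v, G.Adj x v → v ∉ X)
    (lab : Sym2 V → Y)
    (hlab3 : ∀ y : Y,
      {e ∈ G.edgeSet | (∃ u v, e = s(u, v) ∧ u ∈ X ∧ v ∉ X) ∧ lab e = y}.ncard ≤ 3)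
    (hexit : ∀ C : (G.induce Xᶜ).ConnectedComponent, ∃ y : Y, y ≠ y0 ∧
      ∀ u v, G.Adj u v → u ∈ X → ∀ hv : v ∈ Xᶜ,
        (G.induce Xᶜ).connectedComponentMk ⟨v, hv⟩ = C → lab s(u, v) = y) :
    ¬ ∃ M : G.Subgraph, M.IsSpanning ∧ ∀ v : V, (M.neighborSet v).ncard = 2 := by
  rintro ⟨M, -, hM⟩
  obtain ⟨c, hc_ne, hc_lab, hc_adj⟩ := exists_vertexLabel_of_componentLabel hexit
  set K := M.spanningCoe
  have hdeg : ∀ v, K.degree v = 2 := fun v => by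
    rw [← card_neighborSet_eq_degree, ← Nat.card_eq_fintype_card, Nat.card_coe_set_eq]
    exact hM v
  set D : Finset K.Dart := {d | d.fst ∈ X ∧ d.snd ∉ X}
  have hD_card : #D = 2 * X.ncard := by
    rw [K.card_darts_leaving_of_independent X fun u hu v huv => hXindep u hu v (M.adj_sub huv),
      sum_congr rfl fun v _ => hdeg v, sum_const, smul_eq_mul, Set.ncard_eq_toFinset_card',
      mul_comm]
  have hfiber_le : ∀ y, #{d ∈ D | lab d.edge = y} ≤ 2 := fun y => by
    rw [filter_filter]
    have h3 := (card_darts_leaving_label_le_ncard (K := K) M.spanningCoe_le lab X y).trans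
      (hlab3 y)
    obtain ⟨k, hk⟩ := K.even_card_darts_leaving_label (fun v => hdeg v ▸ even_two) X c
      (fun u v huv => hc_adj u v (M.adj_sub huv)) lab
      (fun u v huv => hc_lab u v (M.adj_sub huv)) y
    omega
  have hmaps : ∀ d ∈ D, lab d.edge ∈ univ.erase y0 := fun d hd => by
    simp only [D, mem_filter, mem_univ, true_and] at hd
    rw [mem_erase, show lab d.edge = c d.snd from hc_lab _ _ (M.adj_sub d.adj) hd.1 hd.2]
    exact ⟨hc_ne _ hd.2, mem_univ _⟩
  have hcount := card_le_mul_card_image_of_maps_to hmaps 2 fun y _ => hfiber_le y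
  rw [hD_card, hXcard, card_erase_of_mem (mem_univ _), card_univ] at hcount
  have hY : 0 < Fintype.card Y := Fintype.card_pos_iff.2 ⟨y0⟩
  omega
end
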